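/- arXiv:2011.13124 — 2 statements merged into one kernel-verified Lean document; each statement's English description precedes it below -/
import Mathlib

section
/- Let Γ be a group, G = LΓ ⋊ V the untwisted fraction group viewed inside K̄ ⋊ V with K̄ = ∏_{Q₂}Γ. Then the kernel of the adjoint action of the normalizer N_{K̄}(G) = {f ∈ K̄ : fGf^{-1} = G} on G is exactly the set of constant maps valued in the center Z(Γ). -/
/-! Basic setup: the Cantor space, prefix replacement, Thompson's group `V`,
slopes, dyadic rationals, standard dyadic partitions, locally constant maps,
and the permutation model of the twisted fraction groups `LΓ ⋊ V`. -/

abbrev Cantor : Type := ℕ → Bool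

/-- Concatenation of a finite word with an infinite sequence. -/
def cat (w : List Bool) (x : Cantor) : Cantor :=
  fun n => if n < w.length then w.getD n false else x (n - w.length)

/-- The standard dyadic interval (cylinder) associated to a finite word. -/
def cyl (w : List Bool) : Set Cantor := {x | ∃ y : Cantor, x = cat w y}

/-- Membership in Thompson's group `V`: a homeomorphism of the Cantor space which is
everywhere locally given by prefix replacement. -/
def memV (v : Cantor ≃ₜ Cantor) : Prop :=
  ∀ x : Cantor, ∃ (m w : List Bool) (y : Cantor),
    x = cat m y ∧ ∀ z : Cantor, v (cat m z) = cat w z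

/-- `HasLogSlope v x k` : `k = log₂ v'(x)`, base-2 logarithm of the slope of `v` at `x`. -/
def HasLogSlope (v : Cantor ≃ₜ Cantor) (x : Cantor) (k : ℤ) : Prop :=
  ∃ (m w : List Bool) (y : Cantor),
    x = cat m y ∧ (∀ z : Cantor, v (cat m z) = cat w z) ∧
      k = (m.length : ℤ) - (w.length : ℤ)

open Classical in
noncomputable def logSlope (v : Cantor ≃ₜ Cantor) (x : Cantor) : ℤ :=
  if h : ∃ k : ℤ, HasLogSlope v x k then h.choose else 0

/-- The eventually periodic sequence `c∞ = c·c·c⋯`. -/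
def tailSeq (c : List Bool) : Cantor := fun n => c.getD (n % c.length) false

/-- `x` lies in the tail equivalence class of the word `c`, i.e. `x = y·c∞`. -/
def InTailClass (x : Cantor) (c : List Bool) : Prop :=
  ∃ y : List Bool, x = cat y (tailSeq c)

/-- `x` is eventually periodic (a rational point of the Cantor space). -/
def EvPeriodic (x : Cantor) : Prop :=
  ∃ (y c : List Bool), c ≠ [] ∧ x = cat y (tailSeq c)

/-- A prime word: a nonempty word which is not a proper power of a word. -/
def PrimeWord (c : List Bool) : Prop :=
  c ≠ [] ∧ ∀ (d : List Bool) (k : ℕ), 2 ≤ k → c ≠ (List.replicate k d).flatten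

/-- `conjH φ v = φ ∘ v ∘ φ⁻¹`. -/
def conjH (φ v : Cantor ≃ₜ Cantor) : Cantor ≃ₜ Cantor := φ.symm.trans (v.trans φ)

/-- `φ` normalizes Thompson's group `V` inside `Homeo(𝔠)` : `φ V φ⁻¹ = V`. -/
def NormalizesV (φ : Cantor ≃ₜ Cantor) : Prop :=
  (conjH φ) '' {v | memV v} = {v | memV v}

/-- The copy of the dyadic rationals `Q₂ ⊂ 𝔠` : finitely supported sequences. -/
def InQ2 (x : Cantor) : Prop := ∃ n : ℕ, ∀ m, n ≤ m → x m = false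

def zeroSeq : Cantor := fun _ => false

/-- A standard dyadic partition of the Cantor space. -/
def IsSDP (P : Finset (List Bool)) : Prop :=
  ∀ x : Cantor, ∃! w : List Bool, w ∈ P ∧ x ∈ cyl w

/-- Locally constant map: constant on each piece of some standard dyadic partition. -/
def IsLC {Γ : Type*} (f : Cantor → Γ) : Prop :=
  ∃ P : Finset (List Bool), IsSDP P ∧ ∀ w ∈ P, ∀ y z : Cantor, f (cat w y) = f (cat w z)

/-- `h` agrees on `Q₂` with (the restriction of) a locally constant map. -/
def AgreesOnQ2WithLC {Γ : Type*} (h : Cantor → Γ) : Prop :=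
  ∃ b : Cantor → Γ, IsLC b ∧ ∀ x, InQ2 x → h x = b x

section GroupPart
variable {Γ : Type*} [Group Γ]

/-- `alphaWord α₀ α₁ (m₁⋯m_k) = α_{m_k} ∘ ⋯ ∘ α_{m₁}`. -/
def alphaWord (α₀ α₁ : Γ ≃* Γ) (m : List Bool) : Γ ≃* Γ :=
  m.foldl (fun acc b => acc.trans (if b then α₁ else α₀)) (MulEquiv.refl Γ)

open Classical in
/-- The twisting automorphism `τ_{v,x} = α_{v(I)}⁻¹ ∘ α_I` for a standard dyadic
interval `I` containing `x` and adapted to `v`. -/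
noncomputable def tauEquiv (α₀ α₁ : Γ ≃* Γ) (v : Cantor ≃ₜ Cantor) (x : Cantor) : Γ ≃* Γ :=
  if h : ∃ p : List Bool × List Bool, x ∈ cyl p.1 ∧ ∀ z : Cantor, v (cat p.1 z) = cat p.2 z
  then (alphaWord α₀ α₁ h.choose.1).trans (alphaWord α₀ α₁ h.choose.2).symm
  else MulEquiv.refl Γ

/-- The element `a·v` of the twisted `LΓ ⋊ V`, realized as the permutation
`(x,g) ↦ (v x, a(v x) · τ_{v,x}(g))` of `𝔠 × Γ`. -/
noncomputable def permOf (α₀ α₁ : Γ ≃* Γ) (a : Cantor → Γ) (v : Cantor ≃ₜ Cantor) :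
    Equiv.Perm (Cantor × Γ) where
  toFun p := (v p.1, a (v p.1) * tauEquiv α₀ α₁ v p.1 p.2)
  invFun p := (v.symm p.1, (tauEquiv α₀ α₁ v (v.symm p.1)).symm ((a p.1)⁻¹ * p.2))
  left_inv := by rintro ⟨x, g⟩; simp
  right_inv := by rintro ⟨x, g⟩; simp

end GroupPart

/-- The twisted fraction group `G = LΓ ⋊ V` of the triple `(Γ, α₀, α₁)`,
as a group of permutations of `𝔠 × Γ`. -/
noncomputable def Gsub (Γ : Type*) [Group Γ] (α₀ α₁ : Γ ≃* Γ) :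
    Subgroup (Equiv.Perm (Cantor × Γ)) :=
  Subgroup.closure {p | ∃ a v, IsLC a ∧ memV v ∧ p = permOf α₀ α₁ a v}

/-- The untwisted case `α₀ = α₁ = id`. -/
noncomputable def permOfU {Γ : Type*} [Group Γ] (a : Cantor → Γ) (v : Cantor ≃ₜ Cantor) :=
  permOf (MulEquiv.refl Γ) (MulEquiv.refl Γ) a v

/-- The untwisted fraction group `G = LΓ ⋊ V`. -/
noncomputable def GsubU (Γ : Type*) [Group Γ] := Gsub Γ (MulEquiv.refl Γ) (MulEquiv.refl Γ)

/-- `f ∈ N_{K̄}(G)` : the element `f` of `K̄ = ∏_{Q₂}Γ` normalizes `G = LΓ ⋊ V`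
(untwisted case), i.e. `f·a·(f^v)⁻¹` and `f⁻¹·a·f^v` are locally constant on `Q₂`. -/
def InNormKbar {Γ : Type*} [Group Γ] (f : Cantor → Γ) : Prop :=
  ∀ (a : Cantor → Γ) (v : Cantor ≃ₜ Cantor), IsLC a → memV v →
    AgreesOnQ2WithLC (fun x => f x * a x * (f (v.symm x))⁻¹) ∧
    AgreesOnQ2WithLC (fun x => (f x)⁻¹ * a x * f (v.symm x))

section Aux

lemma cat_nil (y : Cantor) : cat [] y = y := by
  funext n; simp [cat]

lemma memV_refl : memV (Homeomorph.refl Cantor) := by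
  intro x
  exact ⟨[], [], x, (cat_nil x).symm, fun z => rfl⟩

lemma isSDP_nil : IsSDP {([] : List Bool)} := by
  intro x
  refine ⟨[], ⟨by simp, ⟨x, (cat_nil x).symm⟩⟩, ?_⟩
  rintro w ⟨hw, -⟩
  simpa using hw

lemma isLC_const {Γ : Type*} (g : Γ) : IsLC (fun _ : Cantor => g) :=
  ⟨{[]}, isSDP_nil, fun _ _ _ _ => rfl⟩

lemma zeroSeq_inQ2 : InQ2 zeroSeq := ⟨0, fun _ _ => rfl⟩

/-- XOR with a fixed sequence, as a homeomorphism of Cantor space. -/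
def xorHomeo (x : Cantor) : Cantor ≃ₜ Cantor where
  toFun y := fun k => xor (y k) (x k)
  invFun y := fun k => xor (y k) (x k)
  left_inv y := by funext k; simp [Bool.xor_assoc]
  right_inv y := by funext k; simp [Bool.xor_assoc]
  continuous_toFun :=
    continuous_pi fun k =>
      (continuous_of_discreteTopology (f := fun b => xor b (x k))).comp (continuous_apply k)
  continuous_invFun :=
    continuous_pi fun k =>
      (continuous_of_discreteTopology (f := fun b => xor b (x k))).comp (continuous_apply k)

lemma cat_ofFn {n : ℕ} (g : Fin n → Bool) (z : Cantor) (k : ℕ) :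
    cat (List.ofFn g) z k = if h : k < n then g ⟨k, h⟩ else z (k - n) := by
  simp only [cat, List.length_ofFn]
  by_cases h : k < n
  · rw [if_pos h, dif_pos h, List.getD_eq_getElem _ _ (by simpa using h), List.getElem_ofFn]
  · rw [if_neg h, dif_neg h]

lemma memV_xorHomeo (x : Cantor) (n : ℕ) (hx : ∀ m, n ≤ m → x m = false) :
    memV (xorHomeo x) := by
  intro y
  refine ⟨List.ofFn (fun i : Fin n => y i), List.ofFn (fun i : Fin n => xor (y i) (x i)),
    fun k => y (k + n), ?_, ?_⟩
  · funext k
    rw [cat_ofFn]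
    by_cases h : k < n
    · rw [dif_pos h]
    · rw [dif_neg h, Nat.sub_add_cancel (le_of_not_gt h)]
  · intro z
    funext k
    show xor (cat (List.ofFn fun i : Fin n => y i) z k) (x k) = _
    rw [cat_ofFn, cat_ofFn]
    by_cases h : k < n
    · rw [dif_pos h, dif_pos h]
    · rw [dif_neg h, dif_neg h, hx k (le_of_not_gt h), Bool.xor_false]

lemma xorHomeo_symm_self (x : Cantor) : (xorHomeo x).symm x = zeroSeq := by
  have h0 : xorHomeo x zeroSeq = x := by
    funext k
    show xor (zeroSeq k) (x k) = x k
    simp [zeroSeq]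
  calc (xorHomeo x).symm x = (xorHomeo x).symm (xorHomeo x zeroSeq) := by rw [h0]
    _ = zeroSeq := Homeomorph.symm_apply_apply _ _

lemma inQ2_cat_iff (w : List Bool) (y : Cantor) : InQ2 (cat w y) ↔ InQ2 y := by
  constructor
  · rintro ⟨n, hn⟩
    refine ⟨n, fun m hm => ?_⟩
    have := hn (m + w.length) (le_trans hm (Nat.le_add_right _ _))
    simpa [cat, Nat.add_sub_cancel] using this
  · rintro ⟨n, hn⟩
    refine ⟨n + w.length, fun m hm => ?_⟩
    have hw : w.length ≤ m := le_trans (Nat.le_add_left _ _) hm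
    have : ¬ m < w.length := not_lt.mpr hw
    simp only [cat, if_neg this]
    exact hn _ (by omega)

lemma memV_symm_inQ2 {v : Cantor ≃ₜ Cantor} (hv : memV v) {x : Cantor}
    (hx : InQ2 x) : InQ2 (v.symm x) := by
  obtain ⟨m, w, y, h1, h2⟩ := hv (v.symm x)
  have hxw : x = cat w y := by
    have := h2 y
    rw [← h1, Homeomorph.apply_symm_apply] at this
    exact this
  have hy : InQ2 y := (inQ2_cat_iff w y).mp (hxw ▸ hx)
  rw [h1]
  exact (inQ2_cat_iff m y).mpr hy

end Aux

/-- For the untwisted fraction group `G = LΓ ⋊ V ⊆ K̄ ⋊ V` with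
`K̄ = ∏_{Q₂}Γ`, the kernel of the adjoint action of the normalizer
`N_{K̄}(G) = {f ∈ K̄ : fGf⁻¹ = G}` on `G` is exactly the set of constant maps valued in
the center `Z(Γ)`. -/
theorem kernel_of_adjoint_action (Γ : Type*) [Group Γ]
    (f : Cantor → Γ) (hf : InNormKbar f) :
    (∀ (a : Cantor → Γ) (v : Cantor ≃ₜ Cantor), IsLC a → memV v →
        ∀ x, InQ2 x → f x * a x * (f (v.symm x))⁻¹ = a x) ↔
      ∃ g ∈ Subgroup.center Γ, ∀ x, InQ2 x → f x = g := by
  constructor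
  · intro h
    refine ⟨f zeroSeq, ?_, ?_⟩
    · rw [Subgroup.mem_center_iff]
      intro γ
      have := h (fun _ => γ) (Homeomorph.refl Cantor) (isLC_const γ) memV_refl
        zeroSeq zeroSeq_inQ2
      simp only [Homeomorph.refl_symm, Homeomorph.refl_apply] at this
      exact (mul_inv_eq_iff_eq_mul.mp this).symm
    · intro x hx
      obtain ⟨n, hn⟩ := hx
      have := h (fun _ => 1) (xorHomeo x) (isLC_const 1) (memV_xorHomeo x n hn) x ⟨n, hn⟩
      rw [xorHomeo_symm_self, mul_one, mul_inv_eq_one] at this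
      exact this
  · rintro ⟨g, hg, hfg⟩ a v ha hv x hx
    rw [hfg x hx, hfg _ (memV_symm_inQ2 hv hx)]
    rw [(Subgroup.mem_center_iff.mp hg (a x)).symm, mul_inv_cancel_right]
end

section
/- Let φ be a homeomorphism of the Cantor space normalizing Thompson's group V. If v, w ∈ V and x ∈ Q₂ satisfy vx = wx, then log₂((φ^{-1}vφ)'(φ^{-1}x)) − k_φ · log₂(v'(x)) = log₂((φ^{-1}wφ)'(φ^{-1}x)) − k_φ · log₂(w'(x)), where k_φ is the length of a prime word c such that φ^{-1}(Q₂) is the tail equivalence class of c. -/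
/-! Let `u = w⁻¹v`, which fixes `x`, and `x' = φ⁻¹x`. Slopes at a common fixed point transform
proportionally under conjugation: if `u₁, u₂` fix `p` with slopes `k₁, k₂` and their conjugates
have slopes `k₁', k₂'` at `φ⁻¹p`, then `k₂ k₁' = k₁ k₂'`, because `u₁^k₂ u₂^(-k₁)` has slope `0`,
hence is the identity near `p`, and so is its conjugate. Comparing `u` with an element `g ∈ V` of
slope `-1` at `x` reduces the claim to showing that `φ⁻¹gφ` has slope `G = -|c|` at `x'`.
Since `x' = s·c∞` with `c` prime, `|c|` divides `G`; comparing `g` with an element of slope `-|c|`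
at `x'` shows that `G` divides `|c|`; and `G ≤ 0` because `x` is an attracting fixed point of `g`
and attraction is preserved by the topological conjugacy `φ`. -/

open Filter Topology

namespace Function.Periodic

variable {α : Type*} {f : ℕ → α}

lemma nat_gcd {a b : ℕ} (ha : Periodic f a) (hb : Periodic f b) : Periodic f (Nat.gcd a b) := by
  induction a, b using Nat.gcd.induction with
  | H0 n => simpa using hb
  | H1 m n _ ih =>
    rw [Nat.gcd_rec]
    refine ih (fun x => ?_) ha
    calc f (x + n % m) = f (x + n % m + n / m * m) := (ha.nat_mul _ _).symm
      _ = f (x + n) := by rw [add_assoc, Nat.mod_add_div']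
      _ = f x := hb x

lemma of_eventually {L q B : ℕ} (hL : Periodic f L) (hL0 : 0 < L)
    (h : ∀ n ≥ B, f (n + q) = f n) : Periodic f q := by
  intro n
  have hB : B ≤ n + B * L := le_add_left (Nat.le_mul_of_pos_right B hL0)
  calc f (n + q) = f (n + q + B * L) := (hL.nat_mul B _).symm
    _ = f (n + B * L + q) := by rw [add_right_comm]
    _ = f (n + B * L) := h _ hB
    _ = f n := hL.nat_mul B n

end Function.Periodic

lemma Homeomorph.zpow_apply_eq_self {X : Type*} [TopologicalSpace X] {u : X ≃ₜ X} {p : X}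
    (hp : u p = p) (n : ℤ) : (u ^ n) p = p := by
  have hp' : u⁻¹ p = p := u.symm_apply_eq.2 hp.symm
  induction n using Int.induction_on with
  | zero => rfl
  | succ i ih => rw [zpow_add_one, Homeomorph.mul_apply, hp, ih]
  | pred i ih => rw [zpow_sub_one, Homeomorph.mul_apply, hp', ih]

def IsAttractingPt {X : Type*} [TopologicalSpace X] (f : X → X) (p : X) : Prop :=
  ∃ U ∈ 𝓝 p, ∀ q ∈ U, Tendsto (fun n => f^[n] q) atTop (𝓝 p)

lemma IsAttractingPt.conj {X Y : Type*} [TopologicalSpace X] [TopologicalSpace Y] {f : X → X}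
    {p : X} (h : IsAttractingPt f p) (ψ : X ≃ₜ Y) : IsAttractingPt (ψ ∘ f ∘ ψ.symm) (ψ p) := by
  obtain ⟨U, hU, hconv⟩ := h
  have hsc : Function.Semiconj ψ f (ψ ∘ f ∘ ψ.symm) := fun x => by simp
  refine ⟨ψ '' U, ψ.isOpenMap.image_mem_nhds hU, ?_⟩
  rintro _ ⟨q, hq, rfl⟩
  simp_rw [← hsc.iterate_right _ q]
  exact (ψ.continuous.tendsto p).comp (hconv q hq)

namespace Cantor

def take (x : Cantor) (n : ℕ) : List Bool := List.ofFn fun i : Fin n => x i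

def drop (x : Cantor) (n : ℕ) : Cantor := fun k => x (n + k)

@[simp] lemma length_take (x : Cantor) (n : ℕ) : (take x n).length = n := by simp [take]

lemma getD_take {x : Cantor} {n i : ℕ} (h : i < n) : (take x n).getD i false = x i := by
  simp [take, List.getD_eq_getElem?_getD, h]

lemma cat_apply_of_lt {w : List Bool} {x : Cantor} {n : ℕ} (h : n < w.length) :
    cat w x n = w.getD n false := if_pos h

@[simp] lemma cat_apply_length_add (w : List Bool) (x : Cantor) (n : ℕ) :
    cat w x (w.length + n) = x n := by simp [cat]

@[simp] lemma cat_nil (x : Cantor) : cat [] x = x := by funext n; simp [cat]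

lemma cat_append (a b : List Bool) (z : Cantor) : cat (a ++ b) z = cat a (cat b z) := by
  funext n
  simp only [cat, List.length_append]
  split_ifs <;> simp_all <;> first | omega | congr 1; omega

@[simp] lemma drop_cat (w : List Bool) (z : Cantor) : drop (cat w z) w.length = z := by
  funext k; simp [drop]

lemma mem_cyl_iff {x : Cantor} {m : List Bool} :
    x ∈ cyl m ↔ ∀ i < m.length, x i = m.getD i false := by
  refine ⟨fun ⟨y, hy⟩ i hi => hy ▸ cat_apply_of_lt hi, fun h => ⟨drop x m.length, ?_⟩⟩
  funext n
  by_cases hn : n < m.length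
  · rw [cat_apply_of_lt hn, h n hn]
  · simp only [cat, hn, if_false, drop]
    congr 1
    omega

lemma eq_cat_drop {x : Cantor} {m : List Bool} (h : x ∈ cyl m) : x = cat m (drop x m.length) := by
  obtain ⟨y, rfl⟩ := h
  rw [drop_cat]

lemma cat_take_drop (x : Cantor) (n : ℕ) : cat (take x n) (drop x n) = x := by
  have : x ∈ cyl (take x n) := mem_cyl_iff.2 fun i hi => (getD_take (by simpa using hi)).symm
  simpa using (eq_cat_drop this).symm

@[simp] lemma take_cat (w : List Bool) (z : Cantor) : take (cat w z) w.length = w := by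
  apply List.ext_getElem (by simp)
  intro i _ hi
  simp [take, cat_apply_of_lt hi, List.getD_eq_getElem?_getD, hi]

lemma take_add (x : Cantor) (a b : ℕ) : take x (a + b) = take x a ++ take (drop x a) b := by
  simp [take, List.ofFn_add, drop]

lemma exists_append_of_cat_eq_cat {m m' : List Bool} {y y' : Cantor}
    (h : cat m y = cat m' y') (hle : m.length ≤ m'.length) :
    ∃ s, m' = m ++ s ∧ y = cat s y' := by
  obtain ⟨d, hd⟩ := Nat.exists_eq_add_of_le hle
  have hm' : m' = m ++ take y d := by
    rw [← take_cat m' y', ← h, hd, take_add, take_cat, drop_cat]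
  set s := take y d
  refine ⟨s, hm', ?_⟩
  rw [← drop_cat m y, h, hm', cat_append, drop_cat]

lemma eq_of_forall_cat_eq {a b : List Bool} (h : ∀ z, cat a z = cat b z) : a = b := by
  wlog hab : a.length ≤ b.length generalizing a b
  · exact (this (fun z => (h z).symm) (by omega)).symm
  obtain ⟨s, rfl, -⟩ := exists_append_of_cat_eq_cat (h fun _ => false) hab
  cases s with
  | nil => simp
  | cons c s =>
    have hz := congrFun (congrArg (drop · a.length) (h fun _ => !c)) 0
    simp [cat_append, cat] at hz

lemma continuous_cat (w : List Bool) : Continuous (cat w) := by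
  refine continuous_pi fun n => ?_
  by_cases hn : n < w.length
  · simp only [cat, hn, if_true]
    exact continuous_const
  · simp only [cat, hn, if_false]
    exact continuous_apply _

lemma continuous_drop (n : ℕ) : Continuous (drop · n) :=
  continuous_pi fun _ => continuous_apply _

lemma cyl_take (x : Cantor) (n : ℕ) : cyl (take x n) = PiNat.cylinder x n := by
  ext y
  simp only [mem_cyl_iff, length_take, PiNat.mem_cylinder_iff]
  exact forall₂_congr fun i hi => by rw [getD_take hi]

lemma isClopen_cyl (m : List Bool) : IsClopen (cyl m) := by
  rw [← take_cat m fun _ => false, cyl_take, PiNat.cylinder_eq_pi]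
  exact ⟨isClosed_set_pi fun _ _ => isClosed_discrete _,
    isOpen_set_pi (Finset.finite_toSet _) fun _ _ => isOpen_discrete _⟩

lemma cyl_mem_nhds {x : Cantor} {m : List Bool} (h : x ∈ cyl m) : cyl m ∈ 𝓝 x :=
  (isClopen_cyl m).isOpen.mem_nhds h

lemma exists_cyl_take_subset {x : Cantor} {s : Set Cantor} (hs : s ∈ 𝓝 x) :
    ∃ n, cyl (take x n) ⊆ s := by
  obtain ⟨_, ⟨y, n, rfl⟩, hx, hsub⟩ := (PiNat.isTopologicalBasis_cylinders _).mem_nhds_iff.1 hs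
  exact ⟨n, by rwa [cyl_take, PiNat.mem_cylinder_iff_eq.1 hx]⟩

lemma tendsto_of_mem_cyl_take {f : ℕ → Cantor} {N : ℕ → ℕ} {p : Cantor}
    (hf : ∀ n, f n ∈ cyl (take p (N n))) (hN : Tendsto N atTop atTop) :
    Tendsto f atTop (𝓝 p) := by
  intro s hs
  obtain ⟨k, hk⟩ := exists_cyl_take_subset hs
  refine mem_map.2 (mem_of_superset (hN.eventually_ge_atTop k) fun n hn => ?_)
  have hfn := hf n
  rw [cyl_take] at hfn
  exact hk (cyl_take p k ▸ PiNat.cylinder_anti p hn hfn)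

lemma continuous_of_forall_exists_cat {f : Cantor → Cantor}
    (h : ∀ x, ∃ m w, x ∈ cyl m ∧ ∀ z, f (cat m z) = cat w z) : Continuous f := by
  refine continuous_iff_continuousAt.2 fun x => ?_
  obtain ⟨m, w, hx, hf⟩ := h x
  refine ((continuous_cat w).comp (continuous_drop m.length)).continuousAt.congr ?_
  filter_upwards [cyl_mem_nhds hx] with y hy
  conv_rhs => rw [eq_cat_drop hy, hf]
  rfl

lemma tailSeq_periodic (t : List Bool) : Function.Periodic (tailSeq t) t.length := by
  intro n
  simp [tailSeq]

lemma cat_tailSeq (t : List Bool) : cat t (tailSeq t) = tailSeq t := by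
  funext n
  by_cases hn : n < t.length
  · simp [cat, hn, tailSeq, Nat.mod_eq_of_lt hn]
  · simp only [cat, hn, if_false]
    conv_rhs => rw [← Nat.sub_add_cancel (not_lt.1 hn), tailSeq_periodic]

lemma take_tailSeq_length_add (t : List Bool) (k : ℕ) :
    take (tailSeq t) (t.length + k) = t ++ take (tailSeq t) k := by
  conv_lhs => rw [← cat_tailSeq t]
  rw [take_add, take_cat, drop_cat]

lemma iterate_cat_mem_cyl (t : List Bool) (n : ℕ) (z : Cantor) :
    (cat t)^[n] z ∈ cyl (take (tailSeq t) (t.length * n)) := by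
  induction n with
  | zero => exact ⟨z, by simp [take]⟩
  | succ n ih =>
    obtain ⟨y, hy⟩ := ih
    refine ⟨y, ?_⟩
    rw [Function.iterate_succ_apply', hy, Nat.mul_succ, add_comm, take_tailSeq_length_add,
      cat_append]

lemma tendsto_iterate_cat {t : List Bool} (ht : t ≠ []) (z : ℕ → Cantor) :
    Tendsto (fun n => (cat t)^[n] (z n)) atTop (𝓝 (tailSeq t)) :=
  tendsto_of_mem_cyl_take (fun n => iterate_cat_mem_cyl t n (z n))
    (tendsto_atTop_mono (fun n => Nat.le_mul_of_pos_left n (List.length_pos_iff.2 ht))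
      tendsto_id)

lemma eq_tailSeq_of_eq_cat {t : List Bool} {y : Cantor} (ht : t ≠ []) (h : y = cat t y) :
    y = tailSeq t := by
  have hfix (n : ℕ) : (cat t)^[n] y = y := Function.IsFixedPt.iterate h.symm n
  have := tendsto_iterate_cat ht fun _ => y
  simp only [hfix] at this
  exact tendsto_nhds_unique tendsto_const_nhds this

lemma take_mul_eq_flatten {x : Cantor} {g : ℕ} (hx : Function.Periodic x g) (k : ℕ) :
    take x (g * k) = (List.replicate k (take x g)).flatten := by
  have hdrop : drop x g = x := funext fun n => by rw [drop, add_comm, hx]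
  induction k with
  | zero => simp [take]
  | succ k ih => rw [Nat.mul_succ, add_comm, take_add, hdrop, ih, List.replicate_succ,
      List.flatten_cons]

lemma periodic_of_cat_eq_cat {s m : List Bool} {x y : Cantor} {L q : ℕ}
    (h : cat s x = cat m y) (hx : Function.Periodic x L) (hL : 0 < L)
    (hy : Function.Periodic y q) : Function.Periodic x q := by
  refine hx.of_eventually hL (B := m.length) fun n hn => ?_
  obtain ⟨j, hj⟩ : ∃ j, s.length + n = m.length + j := ⟨s.length + n - m.length, by omega⟩
  calc x (n + q) = cat s x (s.length + (n + q)) := (cat_apply_length_add ..).symm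
    _ = y (j + q) := by
      rw [h, show s.length + (n + q) = m.length + (j + q) by omega, cat_apply_length_add]
    _ = y j := hy j
    _ = x n := by rw [← cat_apply_length_add m y j, ← hj, ← h, cat_apply_length_add]

lemma iterate_apply_cat_of_forall {f : Cantor → Cantor} {m t : List Bool}
    (hf : ∀ z, f (cat m z) = cat m (cat t z)) (n : ℕ) (z : Cantor) :
    f^[n] (cat m z) = cat m ((cat t)^[n] z) :=
  (Function.Semiconj.iterate_right (fun z => (hf z).symm) n z).symm

end Cantor

open Cantor

lemma PrimeWord.length_dvd_of_periodic {c : List Bool} (hc : PrimeWord c) {q : ℕ}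
    (h : Function.Periodic (tailSeq c) q) : c.length ∣ q := by
  have hpos : 0 < c.length := List.length_pos_iff.2 hc.1
  set g := Nat.gcd q c.length
  obtain ⟨k, hk⟩ : g ∣ c.length := Nat.gcd_dvd_right _ _
  suffices g = c.length from this ▸ Nat.gcd_dvd_left _ _
  by_contra hne
  have hk2 : 2 ≤ k := by
    rcases k with _ | _ | k
    · rw [mul_zero] at hk
      omega
    · rw [zero_add, mul_one] at hk
      exact absurd hk.symm hne
    · omega
  refine hc.2 (take (tailSeq c) g) k hk2 ?_
  rw [← take_mul_eq_flatten (h.nat_gcd (tailSeq_periodic c)), ← hk]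
  conv_lhs => rw [← take_cat c (tailSeq c), cat_tailSeq]

lemma PrimeWord.length_dvd_sub {c s m w : List Bool} {y : Cantor} (hc : PrimeWord c)
    (hs : cat s (tailSeq c) = cat m y) (hmw : cat m y = cat w y) :
    (c.length : ℤ) ∣ m.length - w.length := by
  wlog hle : m.length ≤ w.length generalizing m w
  · rw [← dvd_neg, neg_sub]
    exact this (hs.trans hmw) hmw.symm (by omega)
  obtain ⟨t, rfl, hy⟩ := exists_append_of_cat_eq_cat hmw hle
  rcases eq_or_ne t [] with rfl | ht
  · simp
  have hper := periodic_of_cat_eq_cat hs (tailSeq_periodic c) (List.length_pos_iff.2 hc.1)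
    (eq_tailSeq_of_eq_cat ht hy ▸ tailSeq_periodic t)
  simpa using Int.natCast_dvd_natCast.2 (hc.length_dvd_of_periodic hper)

lemma length_sub_length_eq_of_cat_eq {v : Cantor ≃ₜ Cantor} {m m' w w' : List Bool}
    {y y' : Cantor} (hx : cat m y = cat m' y') (hv : ∀ z, v (cat m z) = cat w z)
    (hv' : ∀ z, v (cat m' z) = cat w' z) :
    (m.length : ℤ) - w.length = m'.length - w'.length := by
  wlog hle : m.length ≤ m'.length generalizing m m' w w' y y'
  · exact (this hx.symm hv' hv (by omega)).symm
  obtain ⟨s, rfl, -⟩ := exists_append_of_cat_eq_cat hx hle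
  have hw' : w' = w ++ s := eq_of_forall_cat_eq fun z => by
    rw [← hv', cat_append, hv, cat_append]
  simp [hw']

namespace HasLogSlope

variable {u v : Cantor ≃ₜ Cantor} {x p : Cantor} {k j : ℤ}

lemma unique (h : HasLogSlope v x k) (h' : HasLogSlope v x j) : k = j := by
  obtain ⟨m, w, y, hx, hv, rfl⟩ := h
  obtain ⟨m', w', y', hx', hv', rfl⟩ := h'
  exact length_sub_length_eq_of_cat_eq (hx.symm.trans hx') hv hv'

lemma one : HasLogSlope 1 x 0 := ⟨[], [], x, by simp, fun _ => by simp, by simp⟩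

lemma mul (hv : HasLogSlope v x k) (hu : HasLogSlope u (v x) j) :
    HasLogSlope (u * v) x (k + j) := by
  obtain ⟨m, w, y, rfl, hvr, rfl⟩ := hv
  obtain ⟨m', w', y', hvx, hur, rfl⟩ := hu
  rw [hvr] at hvx
  rcases le_total w.length m'.length with hle | hle
  · obtain ⟨s, rfl, rfl⟩ := exists_append_of_cat_eq_cat hvx hle
    refine ⟨m ++ s, w', y', by rw [cat_append], fun z => ?_, by simp; ring⟩
    rw [Homeomorph.mul_apply, cat_append, hvr, ← cat_append, hur]
  · obtain ⟨s, rfl, rfl⟩ := exists_append_of_cat_eq_cat hvx.symm hle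
    refine ⟨m, w' ++ s, y, rfl, fun z => ?_, by simp; ring⟩
    rw [Homeomorph.mul_apply, hvr, cat_append, hur, cat_append]

lemma inv (h : HasLogSlope v x k) : HasLogSlope v⁻¹ (v x) (-k) := by
  obtain ⟨m, w, y, rfl, hv, rfl⟩ := h
  exact ⟨w, m, y, hv y, fun z => v.symm_apply_eq.2 (hv z).symm, by ring⟩

lemma inv_mul {w : Cantor ≃ₜ Cantor} (hvw : v x = w x) (hv : HasLogSlope v x k)
    (hw : HasLogSlope w x j) : HasLogSlope (w⁻¹ * v) x (k - j) := by
  simpa [sub_eq_add_neg] using hv.mul (hvw ▸ hw.inv)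

lemma zpow (hp : u p = p) (h : HasLogSlope u p k) (n : ℤ) : HasLogSlope (u ^ n) p (n * k) := by
  have hinv : HasLogSlope u⁻¹ p (-k) := hp ▸ h.inv
  have hp' : u⁻¹ p = p := u.symm_apply_eq.2 hp.symm
  induction n using Int.induction_on with
  | zero => simpa using one
  | succ i ih =>
    rw [zpow_add_one]
    convert h.mul (hp ▸ ih) using 1
    ring
  | pred i ih =>
    rw [zpow_sub_one]
    convert hinv.mul (hp' ▸ ih) using 1
    ring

end HasLogSlope

lemma PrimeWord.length_dvd_of_hasLogSlope {c s : List Bool} (hc : PrimeWord c)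
    {u : Cantor ≃ₜ Cantor} {p : Cantor} {k : ℤ} (hp : u p = p) (hps : p = cat s (tailSeq c))
    (h : HasLogSlope u p k) : (c.length : ℤ) ∣ k := by
  obtain ⟨m, w, y, rfl, hu, rfl⟩ := h
  exact hc.length_dvd_sub hps.symm (hp.symm.trans (hu y))

lemma memV_iff_forall_hasLogSlope {v : Cantor ≃ₜ Cantor} :
    memV v ↔ ∀ x, ∃ k, HasLogSlope v x k := by
  refine ⟨fun h x => ?_, fun h x => ?_⟩
  · obtain ⟨m, w, y, hx, hv⟩ := h x
    exact ⟨_, m, w, y, hx, hv, rfl⟩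
  · obtain ⟨_, m, w, y, hx, hv, -⟩ := h x
    exact ⟨m, w, y, hx, hv⟩

lemma memV_mul {u v : Cantor ≃ₜ Cantor} (hu : memV u) (hv : memV v) : memV (u * v) := by
  rw [memV_iff_forall_hasLogSlope] at *
  intro x
  obtain ⟨k, hk⟩ := hv x
  obtain ⟨j, hj⟩ := hu (v x)
  exact ⟨_, hk.mul hj⟩

lemma conjH_eq_conj (ψ v : Cantor ≃ₜ Cantor) : conjH ψ v = MulAut.conj ψ v := rfl

@[simp] lemma conjH_apply_apply (ψ v : Cantor ≃ₜ Cantor) (x : Cantor) :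
    conjH ψ v (ψ x) = ψ (v x) := by
  simp [conjH]

lemma conjH_symm_conjH (ψ v : Cantor ≃ₜ Cantor) : conjH ψ.symm (conjH ψ v) = v := by
  ext
  simp [conjH]

lemma NormalizesV.memV_conjH {φ v : Cantor ≃ₜ Cantor} (hφ : NormalizesV φ) (hv : memV v) :
    memV (conjH φ v) := by
  have : conjH φ v ∈ conjH φ '' {v | memV v} := Set.mem_image_of_mem _ hv
  rwa [show conjH φ '' {v | memV v} = {v | memV v} from hφ] at this

lemma NormalizesV.memV_conjH_symm {φ v : Cantor ≃ₜ Cantor} (hφ : NormalizesV φ)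
    (hv : memV v) : memV (conjH φ.symm v) := by
  obtain ⟨u, hu, rfl⟩ : v ∈ conjH φ '' {v | memV v} := hφ.symm ▸ hv
  rwa [conjH_symm_conjH]

lemma eventually_apply_eq_self_of_hasLogSlope_zero {v : Cantor ≃ₜ Cantor} {x : Cantor}
    (hx : v x = x) (h : HasLogSlope v x 0) : ∀ᶠ y in 𝓝 x, v y = y := by
  obtain ⟨m, w, y, rfl, hv, hmw⟩ := h
  obtain ⟨s, rfl, -⟩ := exists_append_of_cat_eq_cat (hx.symm.trans (hv y)) (by omega)
  have hs : s = [] := by simpa using hmw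
  filter_upwards [cyl_mem_nhds ⟨y, rfl⟩] with _ ⟨z, hz⟩
  simp [hz, hv, hs]

lemma hasLogSlope_zero_of_eventually_apply_eq_self {v : Cantor ≃ₜ Cantor} {x : Cantor}
    (h : ∀ᶠ y in 𝓝 x, v y = y) : HasLogSlope v x 0 := by
  obtain ⟨n, hn⟩ := exists_cyl_take_subset h
  exact ⟨take x n, take x n, drop x n, (cat_take_drop x n).symm, fun z => hn ⟨z, rfl⟩, by ring⟩

lemma eventually_conjH_apply_eq_self {v : Cantor ≃ₜ Cantor} {x : Cantor} (ψ : Cantor ≃ₜ Cantor)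
    (h : ∀ᶠ y in 𝓝 x, v y = y) : ∀ᶠ y in 𝓝 (ψ x), conjH ψ v y = y := by
  have hψ : Tendsto ψ.symm (𝓝 (ψ x)) (𝓝 x) := ψ.symm.continuous.tendsto' _ _ (by simp)
  filter_upwards [hψ.eventually h] with y hy
  simp [conjH, hy]

lemma slope_mul_conj_slope_comm {ψ u₁ u₂ : Cantor ≃ₜ Cantor} {p : Cantor} {k₁ k₂ k₁' k₂' : ℤ}
    (hp₁ : u₁ p = p) (hp₂ : u₂ p = p) (h₁ : HasLogSlope u₁ p k₁) (h₂ : HasLogSlope u₂ p k₂)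
    (h₁' : HasLogSlope (conjH ψ u₁) (ψ p) k₁') (h₂' : HasLogSlope (conjH ψ u₂) (ψ p) k₂') :
    k₂ * k₁' = k₁ * k₂' := by
  set h := u₁ ^ k₂ * u₂ ^ (-k₁)
  have hp : h p = p := by
    simp only [h, Homeomorph.mul_apply, Homeomorph.zpow_apply_eq_self hp₁,
      Homeomorph.zpow_apply_eq_self hp₂]
  have hs : HasLogSlope h p 0 := by
    convert (h₂.zpow hp₂ (-k₁)).mul ((Homeomorph.zpow_apply_eq_self hp₂ _).symm ▸
      h₁.zpow hp₁ k₂) using 1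
    ring
  have hs' : HasLogSlope (conjH ψ h) (ψ p) 0 := hasLogSlope_zero_of_eventually_apply_eq_self
    (eventually_conjH_apply_eq_self ψ (eventually_apply_eq_self_of_hasLogSlope_zero hp hs))
  have hp₁' : conjH ψ u₁ (ψ p) = ψ p := by rw [conjH_apply_apply, hp₁]
  have hp₂' : conjH ψ u₂ (ψ p) = ψ p := by rw [conjH_apply_apply, hp₂]
  have hconj : conjH ψ h = conjH ψ u₁ ^ k₂ * conjH ψ u₂ ^ (-k₁) := by
    simp only [h, conjH_eq_conj, map_mul, map_zpow]
  have := (h₂'.zpow hp₂' (-k₁)).mul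
    ((Homeomorph.zpow_apply_eq_self hp₂' _).symm ▸ h₁'.zpow hp₁' k₂)
  rw [← hconj] at this
  linarith [hs'.unique this]

namespace HasLogSlope

variable {u : Cantor ≃ₜ Cantor} {p : Cantor} {k : ℤ}

lemma exists_cat_of_neg (hp : u p = p) (h : HasLogSlope u p k) (hk : k < 0) :
    ∃ m t, t ≠ [] ∧ p = cat m (tailSeq t) ∧ ∀ z, u (cat m z) = cat m (cat t z) := by
  obtain ⟨m, w, y, rfl, hu, rfl⟩ := h
  obtain ⟨t, rfl, hy⟩ := exists_append_of_cat_eq_cat (hp.symm.trans (hu y)) (by omega)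
  have ht : t ≠ [] := by
    rintro rfl
    simp at hk
  exact ⟨m, t, ht, by rw [← eq_tailSeq_of_eq_cat ht hy], fun z => by rw [hu, cat_append]⟩

lemma isAttractingPt (hp : u p = p) (h : HasLogSlope u p k) (hk : k < 0) :
    IsAttractingPt u p := by
  obtain ⟨m, t, ht, rfl, hu⟩ := h.exists_cat_of_neg hp hk
  refine ⟨cyl m, cyl_mem_nhds ⟨_, rfl⟩, ?_⟩
  rintro _ ⟨z, rfl⟩
  simp_rw [iterate_apply_cat_of_forall hu]
  exact ((continuous_cat m).tendsto _).comp (tendsto_iterate_cat ht fun _ => z)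

/-- At a fixed point with positive slope, `u⁻¹` contracts a cylinder `cyl m` onto `p`, so the
forward orbit of a point of `cyl m` can only approach `p` if it starts at `p`. -/
lemma not_isAttractingPt (hp : u p = p) (h : HasLogSlope u p k) (hk : 0 < k) :
    ¬ IsAttractingPt u p := by
  rintro ⟨U, hU, hconv⟩
  have hp' : u⁻¹ p = p := u.symm_apply_eq.2 hp.symm
  obtain ⟨m, t, ht, rfl, hu⟩ := (hp ▸ h.inv).exists_cat_of_neg hp' (by omega)
  have hback (n : ℕ) (q : Cantor) (hq : (⇑u)^[n] q ∈ cyl m) :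
      q = cat m ((cat t)^[n] (drop ((⇑u)^[n] q) m.length)) := by
    rw [← iterate_apply_cat_of_forall hu, ← eq_cat_drop hq]
    exact (Function.LeftInverse.iterate u.symm_apply_apply n q).symm
  obtain ⟨n, hn⟩ := exists_cyl_take_subset (inter_mem hU (cyl_mem_nhds ⟨_, rfl⟩))
  set q := Function.update (cat m (tailSeq t)) n (!cat m (tailSeq t) n)
  have hq : q ∈ cyl (take (cat m (tailSeq t)) n) := by
    rw [cyl_take]
    exact PiNat.update_mem_cylinder _ _ _
  have hlim : Tendsto (fun _ : ℕ => q) atTop (𝓝 (cat m (tailSeq t))) := by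
    refine (((continuous_cat m).tendsto _).comp (tendsto_iterate_cat ht
      fun k => drop ((⇑u)^[k] q) m.length)).congr' ?_
    filter_upwards [(hconv q (hn hq).1).eventually (cyl_mem_nhds ⟨_, rfl⟩)] with k hk
    exact (hback k q hk).symm
  have := congrFun (tendsto_nhds_unique tendsto_const_nhds hlim) n
  simp [q] at this

end HasLogSlope

lemma conj_slope_nonpos_of_neg {ψ u : Cantor ≃ₜ Cantor} {p : Cantor} {k k' : ℤ}
    (hp : u p = p) (h : HasLogSlope u p k) (hk : k < 0)
    (h' : HasLogSlope (conjH ψ u) (ψ p) k') : k' ≤ 0 := by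
  by_contra! hk'
  exact h'.not_isAttractingPt (by rw [conjH_apply_apply, hp]) hk'
    ((h.isAttractingPt hp hk).conj ψ)

section CylSwap

variable {a b : List Bool}

open Classical in
noncomputable def cylSwap (a b : List Bool) (x : Cantor) : Cantor :=
  if x ∈ cyl a then cat b (drop x a.length)
  else if x ∈ cyl b then cat a (drop x b.length) else x

lemma cylSwap_cat_left (z : Cantor) : cylSwap a b (cat a z) = cat b z := by
  rw [cylSwap, if_pos ⟨z, rfl⟩, drop_cat]

lemma cylSwap_cat_right (hab : Disjoint (cyl a) (cyl b)) (z : Cantor) :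
    cylSwap a b (cat b z) = cat a z := by
  rw [cylSwap, if_neg (Set.disjoint_right.1 hab ⟨z, rfl⟩), if_pos ⟨z, rfl⟩, drop_cat]

lemma cylSwap_of_notMem {x : Cantor} (ha : x ∉ cyl a) (hb : x ∉ cyl b) : cylSwap a b x = x := by
  rw [cylSwap, if_neg ha, if_neg hb]

lemma cylSwap_involutive (hab : Disjoint (cyl a) (cyl b)) : Function.Involutive (cylSwap a b) := by
  intro x
  by_cases ha : x ∈ cyl a
  · rw [eq_cat_drop ha, cylSwap_cat_left, cylSwap_cat_right hab]
  by_cases hb : x ∈ cyl b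
  · rw [eq_cat_drop hb, cylSwap_cat_right hab, cylSwap_cat_left]
  rw [cylSwap_of_notMem ha hb, cylSwap_of_notMem ha hb]

lemma cylSwap_exists_cat (hab : Disjoint (cyl a) (cyl b)) (x : Cantor) :
    ∃ m w, x ∈ cyl m ∧ ∀ z, cylSwap a b (cat m z) = cat w z := by
  by_cases ha : x ∈ cyl a
  · exact ⟨a, b, ha, cylSwap_cat_left⟩
  by_cases hb : x ∈ cyl b
  · exact ⟨b, a, hb, cylSwap_cat_right hab⟩
  have hout : (cyl a ∪ cyl b)ᶜ ∈ 𝓝 x :=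
    ((isClopen_cyl a).isClosed.union (isClopen_cyl b).isClosed).isOpen_compl.mem_nhds
      (by simp [ha, hb])
  obtain ⟨n, hn⟩ := exists_cyl_take_subset hout
  refine ⟨take x n, take x n, ⟨drop x n, (cat_take_drop x n).symm⟩, fun z => ?_⟩
  have hz := hn ⟨z, rfl⟩
  simp only [Set.mem_compl_iff, Set.mem_union, not_or] at hz
  exact cylSwap_of_notMem hz.1 hz.2

noncomputable def cylSwapHomeomorph (hab : Disjoint (cyl a) (cyl b)) : Cantor ≃ₜ Cantor where
  toFun := cylSwap a b
  invFun := cylSwap a b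
  left_inv := cylSwap_involutive hab
  right_inv := cylSwap_involutive hab
  continuous_toFun := continuous_of_forall_exists_cat (cylSwap_exists_cat hab)
  continuous_invFun := continuous_of_forall_exists_cat (cylSwap_exists_cat hab)

lemma memV_cylSwapHomeomorph (hab : Disjoint (cyl a) (cyl b)) : memV (cylSwapHomeomorph hab) :=
  fun x => by
    obtain ⟨m, w, ⟨y, hy⟩, hr⟩ := cylSwap_exists_cat hab x
    exact ⟨m, w, y, hy, hr⟩

end CylSwap

lemma disjoint_cyl_not_cons (b : Bool) (l l' : List Bool) :
    Disjoint (cyl ((!b) :: l')) (cyl (b :: l)) :=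
  Set.disjoint_left.2 fun _ ⟨_, hy⟩ ⟨_, hy'⟩ => by simpa [cat] using congrFun (hy.symm.trans hy') 0

/-- For `a = s ++ t` the witness `σ₂ σ₁` maps `a·z ↦ a·t·z`: `σ₁` swaps `cyl a` with a disjoint
cylinder `cyl B`, and `σ₂` swaps `cyl B` with `cyl (a ++ t)`. -/
lemma exists_memV_fixing_hasLogSlope (s t : List Bool) (ht : t ≠ []) :
    ∃ e, memV e ∧ e (cat s (tailSeq t)) = cat s (tailSeq t) ∧
      HasLogSlope e (cat s (tailSeq t)) (-t.length) := by
  obtain ⟨b, l, hbl⟩ := List.exists_cons_of_ne_nil (List.append_ne_nil_of_right_ne_nil s ht)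
  let σ₁ := cylSwapHomeomorph (disjoint_cyl_not_cons b l []).symm
  let σ₂ := cylSwapHomeomorph (disjoint_cyl_not_cons b (l ++ t) [])
  have he (z : Cantor) : (σ₂ * σ₁) (cat (s ++ t) z) = cat (s ++ t ++ t) z := by
    rw [hbl, List.cons_append, Homeomorph.mul_apply]
    exact (congrArg σ₂ (cylSwap_cat_left z)).trans (cylSwap_cat_left z)
  have hp : cat s (tailSeq t) = cat (s ++ t) (tailSeq t) := by rw [cat_append, cat_tailSeq]
  refine ⟨σ₂ * σ₁, memV_mul (memV_cylSwapHomeomorph _) (memV_cylSwapHomeomorph _), ?_,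
    ⟨s ++ t, s ++ t ++ t, tailSeq t, hp, he, by simp⟩⟩
  rw [hp, he, cat_append (s ++ t), cat_tailSeq]

lemma InQ2.eq_cat_tailSeq {x : Cantor} (hx : InQ2 x) : ∃ s, x = cat s (tailSeq [false]) := by
  obtain ⟨n, hn⟩ := hx
  refine ⟨take x n, ?_⟩
  conv_lhs => rw [← cat_take_drop x n]
  congr 1
  funext k
  simp [drop, tailSeq, hn (n + k)]

lemma conj_slope_eq_neg_length {φ : Cantor ≃ₜ Cantor} (hφ : NormalizesV φ) {c s : List Bool}
    (hc : PrimeWord c) {x : Cantor} (hx : φ.symm x = cat s (tailSeq c)) {g : Cantor ≃ₜ Cantor}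
    (hgx : g x = x) (hg : HasLogSlope g x (-1)) {G : ℤ}
    (hG : HasLogSlope (conjH φ.symm g) (φ.symm x) G) : G = -c.length := by
  obtain ⟨e, he, hex, hes⟩ := exists_memV_fixing_hasLogSlope s c hc.1
  rw [← hx] at hex hes
  obtain ⟨E, hE⟩ := memV_iff_forall_hasLogSlope.1 (hφ.memV_conjH he) x
  have hEx : conjH φ e x = x := by simpa [hex] using conjH_apply_apply φ e (φ.symm x)
  have hEG : (c.length : ℤ) = E * G := by
    have := slope_mul_conj_slope_comm (ψ := φ.symm) hEx hgx hE hg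
      (by rwa [conjH_symm_conjH]) hG
    linarith
  have hdvd : (c.length : ℤ) ∣ G :=
    hc.length_dvd_of_hasLogSlope (by rw [conjH_apply_apply, hgx]) hx hG
  have hG0 : G ≤ 0 := conj_slope_nonpos_of_neg hgx hg (by norm_num) hG
  have := Int.natAbs_eq_of_dvd_dvd hdvd ⟨E, by rw [hEG, mul_comm]⟩
  omega

theorem gamma_well_defined_general (φ : Cantor ≃ₜ Cantor) (hφ : NormalizesV φ)
    (c : List Bool) (hc : PrimeWord c)
    (hclass : ∀ y : Cantor, InQ2 (φ y) ↔ InTailClass y c)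
    (v w : Cantor ≃ₜ Cantor)
    (x : Cantor) (hx : InQ2 x) (hvw : v x = w x)
    (kv kw kv' kw' : ℤ)
    (h1 : HasLogSlope v x kv) (h2 : HasLogSlope w x kw)
    (h3 : HasLogSlope (conjH φ.symm v) (φ.symm x) kv')
    (h4 : HasLogSlope (conjH φ.symm w) (φ.symm x) kw') :
    kv' - (c.length : ℤ) * kv = kw' - (c.length : ℤ) * kw := by
  obtain ⟨s, hxs⟩ := hx.eq_cat_tailSeq
  obtain ⟨s', hxs'⟩ := (hclass (φ.symm x)).1 (by rwa [φ.apply_symm_apply])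
  obtain ⟨g, hgV, hgx, hg⟩ := exists_memV_fixing_hasLogSlope s [false] (by simp)
  rw [← hxs] at hgx hg
  simp only [List.length_singleton, Nat.cast_one] at hg
  obtain ⟨G, hG⟩ := memV_iff_forall_hasLogSlope.1 (hφ.memV_conjH_symm hgV) (φ.symm x)
  have hGc : G = -c.length := conj_slope_eq_neg_length hφ hc hxs' hgx hg hG
  have hu' : HasLogSlope (conjH φ.symm (w⁻¹ * v)) (φ.symm x) (kv' - kw') := by
    rw [conjH_eq_conj, map_mul, map_inv]
    exact h3.inv_mul (by simp [hvw]) h4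
  have := slope_mul_conj_slope_comm (by simp [hvw]) hgx (h1.inv_mul hvw h2) hg hu' hG
  rw [hGc] at this
  linarith

/-- Let `φ` normalize `V` and let `c` be a prime word with
`φ⁻¹(Q₂)` the tail class of `c` (so `k_φ = |c|`).  If `v, w ∈ V` and `x ∈ Q₂` satisfy
`vx = wx`, then
`log₂((φ⁻¹vφ)'(φ⁻¹x)) − k_φ·log₂(v'(x)) = log₂((φ⁻¹wφ)'(φ⁻¹x)) − k_φ·log₂(w'(x))`. -/
theorem gamma_well_defined (φ : Cantor ≃ₜ Cantor) (hφ : NormalizesV φ)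
    (c : List Bool) (hc : PrimeWord c)
    (hclass : ∀ y : Cantor, InQ2 (φ y) ↔ InTailClass y c)
    (v w : Cantor ≃ₜ Cantor) (hv : memV v) (hw : memV w)
    (x : Cantor) (hx : InQ2 x) (hvw : v x = w x)
    (kv kw kv' kw' : ℤ)
    (h1 : HasLogSlope v x kv) (h2 : HasLogSlope w x kw)
    (h3 : HasLogSlope (conjH φ.symm v) (φ.symm x) kv')
    (h4 : HasLogSlope (conjH φ.symm w) (φ.symm x) kw') :
    kv' - (c.length : ℤ) * kv = kw' - (c.length : ℤ) * kw :=
  gamma_well_defined_general φ hφ c hc hclass v w x hx hvw kv kw kv' kw' h1 h2 h3 h4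
end
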